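/- arXiv:2504.14721 — 2 statements merged into one kernel-verified Lean document; each statement's English description precedes it below -/
import Mathlib

section
/- Let A ∈ ℝ^{n×n×s} be a third-order tensor whose block circulant matrix ξ(A) has spectral radius strictly less than 1, and let B ∈ ℝ^{n×m×s}. Then the series W_c = Σ_{k=0}^{∞} A^k ⊛ B ⊛ B^T ⊛ (A^T)^k converges and is the unique solution of the T-Lyapunov equation W_c − A⊛W_c⊛A^T = B⊛B^T. -/
open scoped Matrix
/-- A third-order tensor of size `n × m × s` is represented by its `s` frontal slices. -/
abbrev Tensor3 (n m s : ℕ) := ZMod s → Matrix (Fin n) (Fin m) ℝ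

/-- The block circulant operator `ξ`: the `(i, j)` block is the frontal slice `A_{i - j mod s}`. -/
def bcirc {n m s : ℕ} (A : Tensor3 n m s) :
    Matrix (ZMod s × Fin n) (ZMod s × Fin m) ℝ :=
  fun p q => A (p.1 - q.1) p.2 q.2

/-- The T-product `A ⊛ B = μ⁻¹(ξ(A) · μ(B))`, whose `k`-th frontal slice is the circular
convolution `∑ⱼ A_{k-j} · B_j` of the frontal slices. -/
def tProd {n m h s : ℕ} [NeZero s] (A : Tensor3 n m s) (B : Tensor3 m h s) :
    Tensor3 n h s :=
  fun k => ∑ j : ZMod s, A (k - j) * B j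


/-- The T-transpose: each frontal slice is transposed and the order of slices 2,…,s reversed. -/
def tTrans {n m s : ℕ} (A : Tensor3 n m s) : Tensor3 m n s :=
  fun k => (A (-k))ᵀ

/-- The T-identity tensor: first frontal slice the identity matrix, the others zero. -/
def tId (n s : ℕ) : Tensor3 n n s :=
  fun k => if k = 0 then 1 else 0

/-- `k`-fold T-product power of a tensor, `A^0 = I`. -/
def tPow {n s : ℕ} [NeZero s] (A : Tensor3 n n s) : ℕ → Tensor3 n n s
  | 0 => tId n s
  | k + 1 => tProd A (tPow A k)

/-!
The block circulant map `ξ` is injective, multiplicative and commutes with transposition, so in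
terms of `M = ξ(A)` and `C = ξ(B ⊛ Bᵀ)` the T-Lyapunov equation becomes the Stein equation
`X - M X Mᵀ = C` in real matrices. Gelfand's formula turns `ρ(M) < 1` into `‖Mᵏ‖ ≤ rᵏ` for
large `k` and some `r < 1`, so `∑ Mᵏ C (Mᵀ)ᵏ` converges absolutely; shifting the index by one
shows that its sum solves the equation. The difference `D` of two solutions satisfies
`D = Mᵏ D (Mᵀ)ᵏ → 0`. Finally, a series of tensors converges as soon as its block circulant
images do, since every entry of a tensor is an entry of its block circulant matrix.
-/

open Filter Topology

section TopologicalRing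

variable {R : Type*} [Ring R] [TopologicalSpace R] [IsTopologicalRing R] [T2Space R]
  {a b c x y : R}

theorem sub_mul_mul_eq_of_hasSum_pow_mul_mul_pow (h : HasSum (fun k => a ^ k * c * b ^ k) x) :
    x - a * x * b = c := by
  have hshift : HasSum (fun k => a ^ (k + 1) * c * b ^ (k + 1)) (a * x * b) := by
    simpa only [pow_succ' a, pow_succ b, mul_assoc] using (h.mul_left a).mul_right b
  have hx : a * x * b = x - c := by
    simpa using hshift.unique ((hasSum_nat_add_iff' 1).mpr h)
  rw [hx, sub_sub_cancel]

theorem eq_of_sub_mul_mul_eq_sub_mul_mul (ha : Tendsto (a ^ ·) atTop (𝓝 0))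
    (hb : Tendsto (b ^ ·) atTop (𝓝 0)) (h : x - a * x * b = y - a * y * b) : x = y := by
  set d := x - y
  have hd : d = a * d * b := by
    simp only [d, mul_sub, sub_mul]
    rw [sub_eq_sub_iff_sub_eq_sub.mp h]
  have hpow : ∀ k : ℕ, a ^ k * d * b ^ k = d := by
    intro k
    induction k with
    | zero => simp
    | succ k ih =>
      calc a ^ (k + 1) * d * b ^ (k + 1) = a * (a ^ k * d * b ^ k) * b := by
            simp only [pow_succ' a, pow_succ b, mul_assoc]
        _ = d := by rw [ih, ← hd]
  have hlim : Tendsto (fun k : ℕ => a ^ k * d * b ^ k) atTop (𝓝 0) := by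
    simpa using (ha.mul_const d).mul hb
  simp only [hpow] at hlim
  exact sub_eq_zero.mp (tendsto_const_nhds_iff.mp hlim)

end TopologicalRing

section NormedRing

variable {R : Type*} [NormedRing R] {a b : R}

theorem tendsto_pow_atTop_nhds_zero_of_summable_norm (ha : Summable fun k => ‖a ^ k‖) :
    Tendsto (a ^ ·) atTop (𝓝 0) :=
  tendsto_zero_iff_norm_tendsto_zero.mpr ha.tendsto_atTop_zero

theorem summable_pow_mul_mul_pow [CompleteSpace R] (ha : Summable fun k => ‖a ^ k‖)
    (hb : Tendsto (b ^ ·) atTop (𝓝 0)) (c : R) : Summable fun k => a ^ k * c * b ^ k := by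
  refine .of_norm_bounded_eventually_nat (ha.mul_right ‖c‖) ?_
  filter_upwards [(tendsto_zero_iff_norm_tendsto_zero.mp hb).eventually_le_const one_pos]
    with k hk
  calc ‖a ^ k * c * b ^ k‖ ≤ ‖a ^ k‖ * ‖c‖ * ‖b ^ k‖ := norm_mul₃_le
    _ ≤ ‖a ^ k‖ * ‖c‖ * 1 := by gcongr
    _ = ‖a ^ k‖ * ‖c‖ := mul_one _

end NormedRing

open scoped NNReal ENNReal in
theorem summable_norm_pow_of_spectralRadius_lt_one {A : Type*} [NormedRing A] [NormedAlgebra ℂ A]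
    [CompleteSpace A] {a : A} (ha : spectralRadius ℂ a < 1) : Summable fun k => ‖a ^ k‖ := by
  obtain ⟨r, har, hr1⟩ := ENNReal.lt_iff_exists_nnreal_btwn.mp ha
  refine .of_norm_bounded_eventually_nat
    (summable_geometric_of_lt_one r.coe_nonneg (by exact_mod_cast ENNReal.coe_lt_one_iff.mp hr1)) ?_
  have hgelfand := spectrum.pow_nnnorm_pow_one_div_tendsto_nhds_spectralRadius a
  filter_upwards [hgelfand.eventually_lt_const har, eventually_gt_atTop 0] with k hk hk0
  rw [one_div, ENNReal.rpow_inv_lt_iff (by positivity), ENNReal.rpow_natCast, ← ENNReal.coe_pow,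
    ENNReal.coe_lt_coe] at hk
  rw [norm_norm]
  exact_mod_cast hk.le

namespace Matrix

variable {ι : Type*} [Fintype ι] [DecidableEq ι] {M : Matrix ι ι ℝ}

section Frobenius

attribute [local instance] frobeniusNormedRing frobeniusNormedAlgebra

theorem summable_frobenius_norm_pow_of_spectralRadius_lt_one
    (hM : spectralRadius ℂ (M.map (fun x => (x : ℂ))) < 1) : Summable fun k => ‖M ^ k‖ := by
  have hpow : ∀ k, (M ^ k).map (fun x => (x : ℂ)) = M.map (fun x => (x : ℂ)) ^ k :=
    (Complex.ofRealHom.mapMatrix).map_pow M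
  have hnorm : ∀ k, ‖M ^ k‖ = ‖M.map (fun x => (x : ℂ)) ^ k‖ := fun k => by
    rw [← hpow, frobenius_norm_map_eq _ _ Complex.norm_real]
  simp only [hnorm]
  exact summable_norm_pow_of_spectralRadius_lt_one hM

theorem tendsto_pow_of_spectralRadius_lt_one
    (hM : spectralRadius ℂ (M.map (fun x => (x : ℂ))) < 1) : Tendsto (M ^ ·) atTop (𝓝 0) :=
  tendsto_pow_atTop_nhds_zero_of_summable_norm
    (summable_frobenius_norm_pow_of_spectralRadius_lt_one hM)

theorem tendsto_transpose_pow_of_spectralRadius_lt_one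
    (hM : spectralRadius ℂ (M.map (fun x => (x : ℂ))) < 1) : Tendsto (Mᵀ ^ ·) atTop (𝓝 0) := by
  refine tendsto_pow_atTop_nhds_zero_of_summable_norm ?_
  simpa only [← transpose_pow, frobenius_norm_transpose] using
    summable_frobenius_norm_pow_of_spectralRadius_lt_one hM

theorem summable_pow_mul_mul_transpose_pow
    (hM : spectralRadius ℂ (M.map (fun x => (x : ℂ))) < 1) (C : Matrix ι ι ℝ) :
    Summable fun k => M ^ k * C * Mᵀ ^ k := by
  have : CompleteSpace (Matrix ι ι ℝ) := FiniteDimensional.complete ℝ _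
  have hsum := summable_frobenius_norm_pow_of_spectralRadius_lt_one hM
  have hlim := tendsto_transpose_pow_of_spectralRadius_lt_one hM
  exact summable_pow_mul_mul_pow hsum hlim C

end Frobenius

end Matrix

namespace Tensor3

variable {n m h s : ℕ}

theorem bcirc_injective : Function.Injective (bcirc (n := n) (m := m) (s := s)) := by
  intro X Y hXY
  funext k i j
  simpa [bcirc] using congrFun (congrFun hXY (k, i)) (0, j)

theorem bcirc_sub (X Y : Tensor3 n m s) : bcirc (X - Y) = bcirc X - bcirc Y := rfl

theorem bcirc_tTrans (A : Tensor3 n m s) : bcirc (tTrans A) = (bcirc A)ᵀ := by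
  funext p q
  simp [bcirc, tTrans, neg_sub]

theorem bcirc_tId : bcirc (tId n s) = 1 := by
  funext p q
  by_cases h1 : p.1 = q.1 <;> by_cases h2 : p.2 = q.2 <;>
    simp [bcirc, tId, h1, h2, Matrix.one_apply, sub_eq_zero, Prod.ext_iff]

variable [NeZero s]

theorem bcirc_tProd (A : Tensor3 n m s) (B : Tensor3 m h s) :
    bcirc (tProd A B) = bcirc A * bcirc B := by
  funext p q
  simp only [bcirc, tProd, Matrix.sum_apply, Matrix.mul_apply, Fintype.sum_prod_type]
  refine Fintype.sum_equiv (Equiv.addRight q.1) _ _ fun j => Finset.sum_congr rfl fun i _ => ?_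
  rw [Equiv.coe_addRight, add_sub_cancel_right, sub_add_eq_sub_sub, sub_right_comm]

theorem bcirc_tPow (A : Tensor3 n n s) (k : ℕ) : bcirc (tPow A k) = bcirc A ^ k := by
  induction k with
  | zero => exact bcirc_tId
  | succ k ih => rw [tPow, bcirc_tProd, ih, pow_succ']

theorem bcirc_sub_tProd_tProd_tTrans (A X : Tensor3 n n s) :
    bcirc (X - tProd (tProd A X) (tTrans A)) = bcirc X - bcirc A * bcirc X * (bcirc A)ᵀ := by
  rw [bcirc_sub, bcirc_tProd, bcirc_tProd, bcirc_tTrans]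

end Tensor3

theorem HasSum.bcirc {n m s : ℕ} {f : ℕ → Tensor3 n m s} {W : Tensor3 n m s} (h : HasSum f W) :
    HasSum (fun k => bcirc (f k)) (bcirc W) :=
  Pi.hasSum.2 fun _ => Pi.hasSum.2 fun _ => Pi.hasSum.1 (Pi.hasSum.1 (Pi.hasSum.1 h _) _) _

theorem Tensor3.summable_of_summable_bcirc {n m s : ℕ} {f : ℕ → Tensor3 n m s}
    (h : Summable fun k => bcirc (f k)) : Summable f := by
  obtain ⟨S, hS⟩ := h
  refine ⟨fun c i j => S (c, i) (0, j),
    Pi.hasSum.2 fun c => Pi.hasSum.2 fun i => Pi.hasSum.2 fun j => ?_⟩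
  simpa [bcirc] using Pi.hasSum.1 (Pi.hasSum.1 hS (c, i)) (0, j)

/-- If `ξ(A)` has spectral radius `< 1`, the series `∑ₖ Aᵏ ⊛ B ⊛ Bᵀ ⊛ (Aᵀ)ᵏ` converges and its
sum is the unique solution of the T-Lyapunov equation `W - A ⊛ W ⊛ Aᵀ = B ⊛ Bᵀ`. -/
theorem tLyapunov_hasSum_unique {n m s : ℕ} [NeZero s]
    (A : Tensor3 n n s) (B : Tensor3 n m s)
    (hA : spectralRadius ℂ ((bcirc A).map (fun x => (x : ℂ))) < 1) :
    ∃ W : Tensor3 n n s,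
      HasSum (fun k : ℕ => tProd (tProd (tProd (tPow A k) B) (tTrans B)) (tPow (tTrans A) k)) W ∧
      W - tProd (tProd A W) (tTrans A) = tProd B (tTrans B) ∧
      ∀ W' : Tensor3 n n s,
        W' - tProd (tProd A W') (tTrans A) = tProd B (tTrans B) → W' = W := by
  open Tensor3 in
  set M := bcirc A
  have hterm : ∀ k, bcirc (tProd (tProd (tProd (tPow A k) B) (tTrans B)) (tPow (tTrans A) k)) =
      M ^ k * bcirc (tProd B (tTrans B)) * Mᵀ ^ k := fun k => by
    simp only [bcirc_tProd, bcirc_tPow, bcirc_tTrans, M, Matrix.mul_assoc]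
  obtain ⟨W, hW⟩ : Summable fun k =>
      tProd (tProd (tProd (tPow A k) B) (tTrans B)) (tPow (tTrans A) k) :=
    summable_of_summable_bcirc (by simpa only [hterm] using
      Matrix.summable_pow_mul_mul_transpose_pow hA (bcirc (tProd B (tTrans B))))
  have hWM := hW.bcirc
  simp only [hterm] at hWM
  have hWeq : W - tProd (tProd A W) (tTrans A) = tProd B (tTrans B) := bcirc_injective <| by
    rw [bcirc_sub_tProd_tProd_tTrans, sub_mul_mul_eq_of_hasSum_pow_mul_mul_pow hWM]
  refine ⟨W, hW, hWeq, fun W' hW' => bcirc_injective ?_⟩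
  refine eq_of_sub_mul_mul_eq_sub_mul_mul (Matrix.tendsto_pow_of_spectralRadius_lt_one hA)
    (Matrix.tendsto_transpose_pow_of_spectralRadius_lt_one hA) ?_
  rw [← bcirc_sub_tProd_tProd_tTrans, ← bcirc_sub_tProd_tProd_tTrans, hW', hWeq]
end

section
/- Solving the T-Lyapunov equation decouples in the Fourier domain: W_c solves W_c − A⊛W_c⊛A^T = B⊛B^T if and only if for each k = 1,...,s the Fourier-domain diagonal block Ŵ_k of ξ(W_c) solves the matrix Lyapunov equation Ŵ_k − Â_k Ŵ_k Â_k^* = B̂_k B̂_k^*, where Â_k and B̂_k are the corresponding Fourier-domain diagonal blocks of ξ(A) and ξ(B). -/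
open scoped Matrix
/-- `ω = exp(-2πi/s)`, the primitive `s`-th root of unity used in the DFT. -/
noncomputable def tOmega (s : ℕ) : ℂ := Complex.exp (-2 * Real.pi * Complex.I / s)

/-- The `k`-th Fourier-domain diagonal block of the block circulant matrix of a tensor:
`Â_k = ∑ⱼ ω^{k·j} A_j`. -/
noncomputable def fhat {n m s : ℕ} [NeZero s] (A : Tensor3 n m s) (k : ZMod s) :
    Matrix (Fin n) (Fin m) ℂ :=
  ∑ j : ZMod s, (tOmega s) ^ (k.val * j.val) • (A j).map (fun x => (x : ℂ))

/-! `fhat A k` is the discrete Fourier transform on `ZMod s` of the slice sequence of `A`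
(complexified), the character being `ω^(j k)`. The DFT turns the circular convolution `tProd`
into the product of blocks and, because its character satisfies `conj χ(x) = χ(-x)`, turns
`tTrans` of a real tensor into the conjugate transpose. Since the DFT is injective, the tensor
equation holds iff its transform holds at every frequency `k`. -/

open ZMod Matrix

section DFT

variable {N : ℕ} [NeZero N]

lemma dft_conv_mul {l m o : Type*} [Fintype m] (Φ : ZMod N → Matrix l m ℂ)
    (Ψ : ZMod N → Matrix m o ℂ) (k : ZMod N) :
    𝓕 (fun i => ∑ j, Φ (i - j) * Ψ j) k = 𝓕 Φ k * 𝓕 Ψ k := by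
  simp only [dft_apply, Matrix.sum_mul, Matrix.mul_sum, Finset.smul_sum, Matrix.smul_mul,
    Matrix.mul_smul, smul_smul]
  rw [Finset.sum_comm]
  refine Finset.sum_congr rfl fun j _ => ?_
  refine Fintype.sum_equiv (Equiv.subRight j) _ _ fun i => ?_
  rw [Equiv.subRight_apply, ← AddChar.map_add_eq_mul, ← neg_add, ← add_mul, add_sub_cancel]

lemma dft_conjTranspose_neg {l m : Type*} (Φ : ZMod N → Matrix l m ℂ) (k : ZMod N) :
    𝓕 (fun j => (Φ (-j))ᴴ) k = (𝓕 Φ k)ᴴ := by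
  rw [dft_apply, dft_apply, conjTranspose_sum]
  refine Fintype.sum_equiv (Equiv.neg _) _ _ fun j => ?_
  rw [Equiv.neg_apply, conjTranspose_smul, ← starRingEnd_apply, ← AddChar.map_neg_eq_conj,
    neg_mul, neg_neg]

end DFT

lemma tOmega_pow_val_mul {s : ℕ} [NeZero s] (j k : ZMod s) :
    tOmega s ^ (k.val * j.val) = stdAddChar (-(j * k)) := by
  have hcast : -(j * k) = ((-(j.val * k.val : ℕ) : ℤ) : ZMod s) := by push_cast; simp
  rw [hcast, stdAddChar_coe, tOmega, ← Complex.exp_nat_mul]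
  congr 1
  push_cast
  ring

section Fourier

variable {n m s : ℕ} [NeZero s]

lemma fhat_eq_dft (A : Tensor3 n m s) : fhat A = 𝓕 (fun j => (A j).map (↑)) := by
  funext k
  simp only [fhat, dft_apply, tOmega_pow_val_mul]

lemma fhat_injective : Function.Injective (fhat : Tensor3 n m s → _) := by
  intro X Y h
  rw [fhat_eq_dft, fhat_eq_dft] at h
  funext j
  exact map_injective Complex.ofReal_injective (congr_fun (dft.injective h) j)

lemma fhat_sub (X Y : Tensor3 n m s) (k : ZMod s) : fhat (X - Y) k = fhat X k - fhat Y k := by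
  simp only [fhat_eq_dft, ← Pi.sub_apply, ← map_sub]
  refine congrFun (congrArg _ (funext fun j => ?_)) k
  exact Matrix.map_sub _ Complex.ofReal_sub _ _

lemma fhat_tProd {h : ℕ} (A : Tensor3 n m s) (B : Tensor3 m h s) (k : ZMod s) :
    fhat (tProd A B) k = fhat A k * fhat B k := by
  rw [fhat_eq_dft, fhat_eq_dft, fhat_eq_dft, ← dft_conv_mul]
  refine congrFun (congrArg _ (funext fun i => ?_)) k
  calc (tProd A B i).map Complex.ofRealHom
      = ∑ j, (A (i - j) * B j).map Complex.ofRealHom :=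
        map_sum Complex.ofRealHom.toAddMonoidHom.mapMatrix _ _
    _ = _ := by simp only [Matrix.map_mul]; rfl

lemma fhat_tTrans (A : Tensor3 n m s) (k : ZMod s) : fhat (tTrans A) k = (fhat A k)ᴴ := by
  rw [fhat_eq_dft, fhat_eq_dft, ← dft_conjTranspose_neg]
  refine congrFun (congrArg _ (funext fun j => ?_)) k
  rw [tTrans, ← conjTranspose_eq_transpose_of_trivial,
    conjTranspose_map _ fun x => (Complex.conj_ofReal x).symm]

end Fourier

/-- The T-Lyapunov equation decouples in the Fourier domain into `s` matrix Lyapunov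
equations for the Fourier-domain diagonal blocks. -/
theorem tLyapunov_iff_fourier_blocks {n m s : ℕ} [NeZero s]
    (A : Tensor3 n n s) (B : Tensor3 n m s) (W : Tensor3 n n s) :
    W - tProd (tProd A W) (tTrans A) = tProd B (tTrans B) ↔
      ∀ k : ZMod s,
        fhat W k - fhat A k * fhat W k * (fhat A k)ᴴ = fhat B k * (fhat B k)ᴴ := by
  rw [← fhat_injective.eq_iff, funext_iff]
  simp only [fhat_sub, fhat_tProd, fhat_tTrans]
end
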